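/- arXiv:2512.23075 — 2 statements merged into one kernel-verified Lean document; each statement's English description precedes it below -/
import Mathlib

section
/- Simulation Lemma: for every step t with 1 ≤ t ≤ T, ‖d_t^{π_θ} − d_t^{π_roll}‖_TV ≤ (t−1) · D_TV^{tok,max}, where ‖·‖_TV denotes total variation distance between distributions on contexts and D_TV^{tok,max} = max over steps t and contexts c of D_TV(π_θ(·|c), π_roll(·|c)) with D_TV(p,q) = ½ Σ_{v∈𝒱} |p(v) − q(v)|. -/
open Finset

section Setup

variable {X V : Type*}

/-- A policy assigns to each context `(x, y_{<t})` (a prompt together with a token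
prefix of length `t`) a strictly positive probability distribution on the next token. -/
structure Policy (X V : Type*) [Fintype V] where
  prob : ∀ t : ℕ, X × (Fin t → V) → V → ℝ
  pos : ∀ t c v, 0 < prob t c v
  sum_one : ∀ t c, ∑ v, prob t c v = 1

variable [Fintype X] [Fintype V]

/-- Trajectory probability `P^π(y | x) = ∏_t π(y_t | x, y_{<t})`. -/
noncomputable def traj (π : Policy X V) (T : ℕ) (x : X) (y : Fin T → V) : ℝ :=
  ∏ t : Fin T, π.prob t.1 (x, fun s : Fin t.1 => y (Fin.castLE t.isLt.le s)) (y t)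

/-- Context visitation mass at prefix length `k`: this is the paper's `d_{k+1}^π`,
a distribution on pairs (prompt, prefix of `k` tokens). -/
noncomputable def visit (π : Policy X V) (P : X → ℝ) (k : ℕ) (c : X × (Fin k → V)) : ℝ :=
  P c.1 * ∏ s : Fin k, π.prob s.1 (c.1, fun u : Fin s.1 => c.2 (Fin.castLE s.isLt.le u)) (c.2 s)

/-- Total variation distance `½ ∑ |p - q|`. -/
noncomputable def tvDist {α : Type*} [Fintype α] (p q : α → ℝ) : ℝ :=
  (∑ a, |p a - q a|) / 2

/-- KL divergence `∑ p log (p/q)`. -/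
noncomputable def klDiv {α : Type*} [Fintype α] (p q : α → ℝ) : ℝ :=
  ∑ a, p a * Real.log (p a / q a)

/-- The objective `J(π) = E_{x∼P} E_{y∼P^π(·|x)}[R(x,y)]`. -/
noncomputable def Jval (P : X → ℝ) (T : ℕ) (R : X → (Fin T → V) → ℝ) (π : Policy X V) : ℝ :=
  ∑ x, P x * ∑ y : Fin T → V, traj π T x y * R x y

/-- `Q^π(c, v)`: conditional expectation of the reward under continuation by `π`,
given context `c` (of length `k`) and next token `v`. -/
noncomputable def Qval (T : ℕ) (R : X → (Fin T → V) → ℝ) (π : Policy X V)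
    (k : ℕ) (hk : k < T) (c : X × (Fin k → V)) (v : V) : ℝ := by
  classical
  exact ∑ y : Fin T → V,
    if (∀ s : Fin k, y (Fin.castLE hk.le s) = c.2 s) ∧ y ⟨k, hk⟩ = v then
      (∏ s : Fin T, if k < s.1 then
          π.prob s.1 (c.1, fun u : Fin s.1 => y (Fin.castLE s.isLt.le u)) (y s)
        else 1) * R c.1 y
    else 0

/-- `V^π(c) = E_{v ∼ π(·|c)}[Q^π(c, v)]`. -/
noncomputable def Vval (T : ℕ) (R : X → (Fin T → V) → ℝ) (π : Policy X V)
    (k : ℕ) (hk : k < T) (c : X × (Fin k → V)) : ℝ :=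
  ∑ v, π.prob k c v * Qval T R π k hk c v

/-- Per-step advantage `A_t(c, v) = Q^{π_roll}(c,v) - V^{π_roll}(c)`. -/
noncomputable def Aval (T : ℕ) (R : X → (Fin T → V) → ℝ) (πroll : Policy X V)
    (k : ℕ) (hk : k < T) (c : X × (Fin k → V)) (v : V) : ℝ :=
  Qval T R πroll k hk c v - Vval T R πroll k hk c

/-- `g_t(c) = E_{v ∼ π_θ(·|c)}[A_t(c, v)]`. -/
noncomputable def gval (T : ℕ) (R : X → (Fin T → V) → ℝ) (πroll πθ : Policy X V)
    (k : ℕ) (hk : k < T) (c : X × (Fin k → V)) : ℝ :=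
  ∑ v, πθ.prob k c v * Aval T R πroll k hk c v

/-- Surrogate objective `L = ∑_{t=1}^T E_{c ∼ d_t^{π_roll}}[g_t(c)]`. -/
noncomputable def surrogate (P : X → ℝ) (T : ℕ) (R : X → (Fin T → V) → ℝ)
    (πroll πθ : Policy X V) : ℝ :=
  ∑ k : Fin T, ∑ c : X × (Fin k.1 → V), visit πroll P k.1 c * gval T R πroll πθ k.1 k.isLt c

/-- Approximation error `Error = J(π_θ) - J(π_roll) - L`. -/
noncomputable def errVal (P : X → ℝ) (T : ℕ) (R : X → (Fin T → V) → ℝ)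
    (πroll πθ : Policy X V) : ℝ :=
  Jval P T R πθ - Jval P T R πroll - surrogate P T R πroll πθ

/-- Sequence-level KL divergence `D_KL^seq = E_{x∼P}[D_KL(P^{π_roll}(·|x) ‖ P^{π_θ}(·|x))]`. -/
noncomputable def seqKL (P : X → ℝ) (T : ℕ) (πroll πθ : Policy X V) : ℝ :=
  ∑ x, P x * klDiv (fun y : Fin T → V => traj πroll T x y) (fun y => traj πθ T x y)

end Setup

/-! The context distribution at prefix length `k + 1` is the one at length `k` composed with the
next-token kernel. For `a ≥ 0` and a probability vector `q` one has
`|a p - b q| ≤ a |p - q| + |a - b| q`, so composing two distributions `μ, ν` with kernels whose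
pointwise TV distance is at most `D` raises their TV distance by at most `D`. Induction on the
prefix length gives the bound `(t - 1) D`. -/

section TotalVariation

variable {α β : Type*} [Fintype α] [Fintype β]

lemma tvDist_comp_equiv (e : α ≃ β) (p q : β → ℝ) : tvDist (p ∘ e) (q ∘ e) = tvDist p q := by
  simp only [tvDist, Function.comp_apply, e.sum_comp fun b => |p b - q b|]

lemma sum_abs_mul_sub_mul_le {a : ℝ} (b : ℝ) (ha : 0 ≤ a) (p q : β → ℝ) (hq : ∀ v, 0 ≤ q v)
    (hq1 : ∑ v, q v = 1) :
    ∑ v, |a * p v - b * q v| ≤ a * ∑ v, |p v - q v| + |a - b| :=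
  calc ∑ v, |a * p v - b * q v| = ∑ v, |a * (p v - q v) + (a - b) * q v| := by
        simp only [mul_sub, sub_mul, sub_add_sub_cancel]
    _ ≤ ∑ v, (a * |p v - q v| + |a - b| * q v) := by
        gcongr with v
        refine (abs_add_le _ _).trans_eq ?_
        rw [abs_mul, abs_mul, abs_of_nonneg ha, abs_of_nonneg (hq v)]
    _ = a * ∑ v, |p v - q v| + |a - b| := by
        rw [sum_add_distrib, ← mul_sum, ← mul_sum, hq1, mul_one]

lemma tvDist_compProd_le {μ ν : α → ℝ} {p q : α → β → ℝ} {D : ℝ} (hμ : ∀ a, 0 ≤ μ a)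
    (hμ1 : ∑ a, μ a = 1) (hq : ∀ a b, 0 ≤ q a b) (hq1 : ∀ a, ∑ b, q a b = 1)
    (hD : ∀ a, tvDist (p a) (q a) ≤ D) :
    tvDist (fun c : α × β => μ c.1 * p c.1 c.2) (fun c => ν c.1 * q c.1 c.2) ≤ D + tvDist μ ν := by
  have key : ∑ c : α × β, |μ c.1 * p c.1 c.2 - ν c.1 * q c.1 c.2|
      ≤ ∑ a, (μ a * (2 * D) + |μ a - ν a|) := by
    rw [Fintype.sum_prod_type]
    gcongr with a
    refine (sum_abs_mul_sub_mul_le (ν a) (hμ a) (p a) (q a) (hq a) (hq1 a)).trans ?_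
    gcongr
    · exact hμ a
    · linarith [hD a, show tvDist (p a) (q a) = (∑ b, |p a b - q a b|) / 2 from rfl]
  rw [sum_add_distrib, ← sum_mul, hμ1] at key
  unfold tvDist
  linarith

end TotalVariation

lemma Fin.snoc_castLE {k j : ℕ} {α : Type*} (y : Fin k → α) (v : α) (hj : j ≤ k)
    (h : j ≤ k + 1) (u : Fin j) :
    (Fin.snoc y v : Fin (k + 1) → α) (Fin.castLE h u) = y (Fin.castLE hj u) :=
  Fin.snoc_castSucc (α := fun _ => α) v y (Fin.castLE hj u)

section Visitation

variable {X V : Type*} [Fintype V]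

def prefixSnocEquiv (k : ℕ) : (X × (Fin k → V)) × V ≃ X × (Fin (k + 1) → V) :=
  (Equiv.prodAssoc _ _ _).trans
    (Equiv.prodCongr (Equiv.refl X) ((Equiv.prodComm _ _).trans (Fin.snocEquiv fun _ => V)))

lemma visit_succ (π : Policy X V) (P : X → ℝ) (k : ℕ) (c : X × (Fin k → V)) (v : V) :
    visit π P (k + 1) (prefixSnocEquiv k (c, v)) = visit π P k c * π.prob k c v := by
  simp [visit, prefixSnocEquiv, Fin.snocEquiv, Fin.prod_univ_castSucc, mul_assoc,
    Fin.snoc_castLE _ _ (Fin.is_le _)]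

lemma visit_nonneg (π : Policy X V) {P : X → ℝ} (hP : ∀ x, 0 ≤ P x) (k : ℕ)
    (c : X × (Fin k → V)) : 0 ≤ visit π P k c :=
  mul_nonneg (hP _) (prod_nonneg fun _ _ => (π.pos _ _ _).le)

lemma visit_succ_comp_prefixSnocEquiv (π : Policy X V) (P : X → ℝ) (k : ℕ) :
    visit π P (k + 1) ∘ prefixSnocEquiv k = fun c => visit π P k c.1 * π.prob k c.1 c.2 :=
  funext fun c => visit_succ π P k c.1 c.2

variable [Fintype X]

lemma sum_visit (π : Policy X V) {P : X → ℝ} (hP : ∑ x, P x = 1) (k : ℕ) :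
    ∑ c, visit π P k c = 1 := by
  induction k with
  | zero => simpa [visit, Fintype.sum_prod_type] using hP
  | succ k ih =>
    rw [← (prefixSnocEquiv k).sum_comp, Fintype.sum_prod_type]
    simp_rw [visit_succ, ← mul_sum, π.sum_one, mul_one]
    exact ih

lemma tvDist_visit_le (π π' : Policy X V) {P : X → ℝ} (hP0 : ∀ x, 0 ≤ P x) (hP1 : ∑ x, P x = 1)
    {D : ℝ} (n : ℕ) (hD : ∀ k < n, ∀ c, tvDist (π'.prob k c) (π.prob k c) ≤ D) :
    tvDist (visit π' P n) (visit π P n) ≤ n * D := by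
  induction n with
  | zero => simp [tvDist, visit]
  | succ n ih =>
    rw [← tvDist_comp_equiv (prefixSnocEquiv n), visit_succ_comp_prefixSnocEquiv,
      visit_succ_comp_prefixSnocEquiv]
    have hstep := tvDist_compProd_le (ν := visit π P n) (visit_nonneg π' hP0 n)
      (sum_visit π' hP1 n) (fun c => (π.pos n c · |>.le)) (π.sum_one n) (hD n n.lt_succ_self)
    have hprev := ih fun k hk => hD k (hk.trans n.lt_succ_self)
    push_cast
    linarith

end Visitation

theorem simulation_lemma_general
    {X V : Type*} [Fintype X] [Fintype V]
    (T : ℕ)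
    (P : X → ℝ) (hP0 : ∀ x, 0 ≤ P x) (hP1 : ∑ x, P x = 1)
    (πroll πθ : Policy X V)
    (Dtv : ℝ)
    (hD : ∀ k : ℕ, k < T → ∀ c : X × (Fin k → V),
      tvDist (πθ.prob k c) (πroll.prob k c) ≤ Dtv)
    (t : ℕ) (ht1 : 1 ≤ t) (ht2 : t ≤ T) :
    tvDist (visit πθ P (t - 1)) (visit πroll P (t - 1)) ≤ ((t : ℝ) - 1) * Dtv := by
  have h := tvDist_visit_le πroll πθ hP0 hP1 (t - 1) fun k hk => hD k (by omega)
  rwa [Nat.cast_sub ht1, Nat.cast_one] at h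

/-- **Simulation Lemma**: for every `1 ≤ t ≤ T`,
`‖d_t^{π_θ} − d_t^{π_roll}‖_TV ≤ (t−1) · D_TV^tok,max`.
Here `Dtv` is (an upper bound on, in particular the maximum of) the token-level TV
divergences over all steps and contexts, and `d_t^π = visit π P (t−1)`. -/
theorem simulation_lemma
    {X V : Type*} [Fintype X] [Fintype V]
    (T : ℕ) (hT : 1 ≤ T)
    (P : X → ℝ) (hP0 : ∀ x, 0 ≤ P x) (hP1 : ∑ x, P x = 1)
    (πroll πθ : Policy X V)
    (Dtv : ℝ)
    (hD : ∀ k : ℕ, k < T → ∀ c : X × (Fin k → V),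
      tvDist (πθ.prob k c) (πroll.prob k c) ≤ Dtv)
    (t : ℕ) (ht1 : 1 ≤ t) (ht2 : t ≤ T) :
    tvDist (visit πθ P (t - 1)) (visit πroll P (t - 1)) ≤ ((t : ℝ) - 1) * Dtv :=
  simulation_lemma_general T P hP0 hP1 πroll πθ Dtv hD t ht1 ht2
end

section
/- Mixed bound (Theorem 3.2): if the reward takes values in [0,1], then |Error| ≤ 2 · T · √( D_KL^{tok,max} · D_KL^{seq} ), where D_KL^{tok,max} = max over steps t and contexts c of D_KL(π_roll(·|c) ‖ π_θ(·|c)), D_KL^{seq} = E_{x∼P}[ D_KL(P^{π_roll}(·|x) ‖ P^{π_θ}(·|x)) ], and D_KL(p‖q) = Σ p log(p/q). -/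
open Finset

section AuxAnalysis

lemma log_le_half_sub_inv {t : ℝ} (ht : 1 ≤ t) : Real.log t ≤ (t - t⁻¹) / 2 := by
  have ht0 : (0:ℝ) < t := lt_of_lt_of_le one_pos ht
  have hne : ∀ x : ℝ, x ∈ Set.uIcc (1:ℝ) t → x ≠ 0 := by
    intro x hx
    rw [Set.uIcc_of_le ht] at hx
    exact ne_of_gt (lt_of_lt_of_le one_pos hx.1)
  have h0ni : (0:ℝ) ∉ Set.uIcc (1:ℝ) t := fun h0 => hne 0 h0 rfl
  have hI1 : IntervalIntegrable (fun x : ℝ => x⁻¹) MeasureTheory.volume 1 t :=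
    intervalIntegral.intervalIntegrable_inv hne continuousOn_id
  have hI2 : IntervalIntegrable (fun x : ℝ => x ^ (-2 : ℤ)) MeasureTheory.volume 1 t :=
    intervalIntegral.intervalIntegrable_zpow (Or.inr h0ni)
  have hIc : IntervalIntegrable (fun _ : ℝ => (1:ℝ)) MeasureTheory.volume 1 t :=
    intervalIntegrable_const (c := 1)
  have hI3 : IntervalIntegrable (fun x : ℝ => (1 + x ^ (-2 : ℤ)) / 2) MeasureTheory.volume 1 t :=
    (hIc.add hI2).div_const 2
  have hmono : (∫ x in (1:ℝ)..t, x⁻¹) ≤ ∫ x in (1:ℝ)..t, (1 + x ^ (-2 : ℤ)) / 2 := by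
    apply intervalIntegral.integral_mono_on ht hI1 hI3
    intro x hx
    have hx0 : (0:ℝ) < x := lt_of_lt_of_le one_pos hx.1
    have hxx : x ^ (-2 : ℤ) = x⁻¹ * x⁻¹ := by
      rw [zpow_neg, zpow_two, mul_inv]
    rw [hxx]
    nlinarith [sq_nonneg (x⁻¹ - 1)]
  have hval : (∫ x in (1:ℝ)..t, (1 + x ^ (-2 : ℤ)) / 2) = (t - t⁻¹) / 2 := by
    rw [intervalIntegral.integral_div,
      intervalIntegral.integral_add hIc hI2,
      intervalIntegral.integral_const, integral_zpow (Or.inr ⟨by norm_num, h0ni⟩)]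
    norm_num
    ring
  calc Real.log t = ∫ x in (1:ℝ)..t, x⁻¹ := by
        rw [integral_inv_of_pos one_pos ht0, div_one]
    _ ≤ _ := hmono
    _ = _ := hval

lemma half_quad_le_log {t : ℝ} (ht : 1 ≤ t) : 3/2 - 2*t⁻¹ + t⁻¹^2/2 ≤ Real.log t := by
  have ht0 : (0:ℝ) < t := lt_of_lt_of_le one_pos ht
  have hne : ∀ x : ℝ, x ∈ Set.uIcc (1:ℝ) t → x ≠ 0 := by
    intro x hx
    rw [Set.uIcc_of_le ht] at hx
    exact ne_of_gt (lt_of_lt_of_le one_pos hx.1)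
  have h0ni : (0:ℝ) ∉ Set.uIcc (1:ℝ) t := fun h0 => hne 0 h0 rfl
  have hI1 : IntervalIntegrable (fun x : ℝ => x⁻¹) MeasureTheory.volume 1 t :=
    intervalIntegral.intervalIntegrable_inv hne continuousOn_id
  have hI2 : IntervalIntegrable (fun x : ℝ => x ^ (-2 : ℤ)) MeasureTheory.volume 1 t :=
    intervalIntegral.intervalIntegrable_zpow (Or.inr h0ni)
  have hI3 : IntervalIntegrable (fun x : ℝ => x ^ (-3 : ℤ)) MeasureTheory.volume 1 t :=
    intervalIntegral.intervalIntegrable_zpow (Or.inr h0ni)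
  have hI4 : IntervalIntegrable (fun x : ℝ => 2 * x ^ (-2 : ℤ) - x ^ (-3 : ℤ))
      MeasureTheory.volume 1 t := (hI2.const_mul 2).sub hI3
  have hmono : (∫ x in (1:ℝ)..t, 2 * x ^ (-2 : ℤ) - x ^ (-3 : ℤ)) ≤ ∫ x in (1:ℝ)..t, x⁻¹ := by
    apply intervalIntegral.integral_mono_on ht hI4 hI1
    intro x hx
    have hx1 : (1:ℝ) ≤ x := hx.1
    have hx0 : (0:ℝ) < x := lt_of_lt_of_le one_pos hx1
    have h2 : x ^ (-2 : ℤ) = x⁻¹ * x⁻¹ := by rw [zpow_neg, zpow_two, mul_inv]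
    have h3 : x ^ (-3 : ℤ) = x⁻¹ * x⁻¹ * x⁻¹ := by
      rw [zpow_neg, show (3:ℤ) = 2 + 1 from rfl, zpow_add₀ hx0.ne', zpow_two, zpow_one,
        mul_inv, mul_inv]
    rw [h2, h3]
    have hxi : x⁻¹ ≤ 1 := inv_le_one_of_one_le₀ hx1
    have hxi0 : 0 < x⁻¹ := inv_pos.2 hx0
    nlinarith [sq_nonneg (x⁻¹ - 1), mul_pos hxi0 hxi0]
  have hval : (∫ x in (1:ℝ)..t, 2 * x ^ (-2 : ℤ) - x ^ (-3 : ℤ))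
      = 3/2 - 2*t⁻¹ + t⁻¹^2/2 := by
    rw [intervalIntegral.integral_sub (hI2.const_mul 2) hI3,
      intervalIntegral.integral_const_mul, integral_zpow (Or.inr ⟨by norm_num, h0ni⟩),
      integral_zpow (Or.inr ⟨by norm_num, h0ni⟩)]
    have : t ^ (2:ℤ) = t ^ (2:ℕ) := zpow_ofNat t 2
    norm_num [this]
    ring
  calc 3/2 - 2*t⁻¹ + t⁻¹^2/2 = _ := hval.symm
    _ ≤ ∫ x in (1:ℝ)..t, x⁻¹ := hmono
    _ = Real.log t := by rw [integral_inv_of_pos one_pos ht0, div_one]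

lemma pointwise_kl {x y : ℝ} (hx : 0 < x) (hy : 0 < y) :
    x - y + (x - y) ^ 2 / (2 * max x y) ≤ x * Real.log (x / y) := by
  rcases le_total x y with h | h
  · rw [max_eq_right h]
    have ht : 1 ≤ y / x := (one_le_div hx).2 h
    have hlog := log_le_half_sub_inv ht
    have hinv : (y / x)⁻¹ = x / y := inv_div y x
    rw [hinv] at hlog
    have hlx : Real.log (x/y) = -Real.log (y/x) := by rw [← Real.log_inv, inv_div]
    have hlog2 : -((y/x - x/y)/2) ≤ Real.log (x/y) := by rw [hlx]; linarith
    calc x - y + (x - y)^2/(2*y) = x * (-((y/x - x/y)/2)) := by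
          field_simp
          ring
      _ ≤ x * Real.log (x/y) := mul_le_mul_of_nonneg_left hlog2 hx.le
  · rw [max_eq_left h]
    have ht : 1 ≤ x / y := (one_le_div hy).2 h
    have hlog := half_quad_le_log ht
    have hinv : (x / y)⁻¹ = y / x := inv_div x y
    rw [hinv] at hlog
    calc x - y + (x - y)^2/(2*x) = x * (3/2 - 2*(y/x) + (y/x)^2/2) := by
          field_simp
          ring
      _ ≤ x * Real.log (x/y) := mul_le_mul_of_nonneg_left hlog hx.le

lemma klDiv_nonneg {α : Type*} [Fintype α] {p q : α → ℝ}
    (hp : ∀ a, 0 < p a) (hq : ∀ a, 0 < q a) (hp1 : ∑ a, p a = 1) (hq1 : ∑ a, q a = 1) :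
    0 ≤ klDiv p q := by
  have : ∀ a : α, p a - q a + (p a - q a)^2/(2 * max (p a) (q a)) ≤ p a * Real.log (p a / q a) :=
    fun a => pointwise_kl (hp a) (hq a)
  have hs := Finset.sum_le_sum (fun a (_ : a ∈ univ) => this a)
  rw [klDiv]
  refine le_trans ?_ hs
  rw [Finset.sum_add_distrib, Finset.sum_sub_distrib, hp1, hq1]
  have : 0 ≤ ∑ a, (p a - q a)^2/(2 * max (p a) (q a)) :=
    Finset.sum_nonneg fun a _ => div_nonneg (sq_nonneg _)
      (by have := (hp a).trans_le (le_max_left (p a) (q a)); linarith)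
  linarith

/-- Pinsker-type bound: `∑ |p - q| ≤ 2 √(KL(p‖q))`. -/
lemma sum_abs_le_two_sqrt_klDiv {α : Type*} [Fintype α] {p q : α → ℝ}
    (hp : ∀ a, 0 < p a) (hq : ∀ a, 0 < q a) (hp1 : ∑ a, p a = 1) (hq1 : ∑ a, q a = 1) :
    ∑ a, |p a - q a| ≤ 2 * Real.sqrt (klDiv p q) := by
  have hkl : ∀ a : α, (p a - q a)^2/(2 * max (p a) (q a)) ≤
      p a * Real.log (p a / q a) - (p a - q a) := fun a => by
    have := pointwise_kl (hp a) (hq a)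
    linarith
  have habs : ∀ a : α, |p a - q a| =
      Real.sqrt (2 * max (p a) (q a)) * Real.sqrt ((p a - q a)^2/(2 * max (p a) (q a))) := by
    intro a
    have hm : 0 < 2 * max (p a) (q a) := by
      have := (hp a).trans_le (le_max_left (p a) (q a)); linarith
    rw [← Real.sqrt_mul hm.le]
    rw [mul_div_cancel₀ _ hm.ne']
    exact (Real.sqrt_sq_eq_abs _).symm
  calc ∑ a, |p a - q a|
      = ∑ a, Real.sqrt (2 * max (p a) (q a)) * Real.sqrt ((p a - q a)^2/(2 * max (p a) (q a))) :=
        Finset.sum_congr rfl fun a _ => habs a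
    _ ≤ Real.sqrt (∑ a, 2 * max (p a) (q a)) *
        Real.sqrt (∑ a, (p a - q a)^2/(2 * max (p a) (q a))) :=
        Real.sum_sqrt_mul_sqrt_le _
          (fun a => by have := (hp a).trans_le (le_max_left (p a) (q a)); linarith)
          (fun a => by
            have hm : 0 < 2 * max (p a) (q a) := by
              have := (hp a).trans_le (le_max_left (p a) (q a)); linarith
            exact div_nonneg (sq_nonneg _) hm.le)
    _ ≤ Real.sqrt 4 * Real.sqrt (klDiv p q) := by
        apply mul_le_mul
        · apply Real.sqrt_le_sqrt
          have : ∀ a : α, 2 * max (p a) (q a) ≤ 2 * (p a + q a) := fun a => by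
            have := (hp a).le; have := (hq a).le
            rcases max_cases (p a) (q a) with ⟨he, _⟩ | ⟨he, _⟩ <;> rw [he] <;> linarith
          calc ∑ a, 2 * max (p a) (q a) ≤ ∑ a, 2 * (p a + q a) := Finset.sum_le_sum fun a _ => this a
            _ = 4 := by rw [← Finset.mul_sum, Finset.sum_add_distrib, hp1, hq1]; norm_num
        · apply Real.sqrt_le_sqrt
          calc ∑ a, (p a - q a)^2/(2 * max (p a) (q a))
              ≤ ∑ a, (p a * Real.log (p a / q a) - (p a - q a)) :=
                Finset.sum_le_sum fun a _ => hkl a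
            _ = klDiv p q := by
                rw [Finset.sum_sub_distrib, Finset.sum_sub_distrib, hp1, hq1, klDiv]
                ring
        · exact Real.sqrt_nonneg _
        · exact Real.sqrt_nonneg _
    _ = 2 * Real.sqrt (klDiv p q) := by
        rw [show (4:ℝ) = 2^2 by norm_num, Real.sqrt_sq (by norm_num : (0:ℝ) ≤ 2)]

end AuxAnalysis

section Comb

variable {X V : Type*} [Fintype X] [Fintype V]

open scoped Classical

/-- Extend a prefix by one token. -/
def snocF {n : ℕ} (c : Fin n → V) (v : V) : Fin (n+1) → V :=
  Fin.snoc (α := fun _ => V) c v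

/-- Tail sum: expected value of `G` over trajectories that extend the prefix `c`,
where steps `≥ k` follow `π`. -/
noncomputable def tailR (π : Policy X V) (T : ℕ) (x : X) (G : (Fin T → V) → ℝ)
    (k : ℕ) (hk : k ≤ T) (c : Fin k → V) : ℝ :=
  ∑ y : Fin T → V,
    if ∀ s : Fin k, y (Fin.castLE hk s) = c s then
      (∏ s : Fin T, if k ≤ s.1 then
          π.prob s.1 (x, fun u : Fin s.1 => y (Fin.castLE s.isLt.le u)) (y s)
        else 1) * G y
    else 0

/-- Head probability of a prefix. -/
noncomputable def head (π : Policy X V) (x : X) (k : ℕ) (c : Fin k → V) : ℝ :=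
  ∏ s : Fin k, π.prob s.1 (x, fun u : Fin s.1 => c (Fin.castLE s.isLt.le u)) (c s)

lemma snoc_val_lt {n : ℕ} (c : Fin n → V) (v : V) (i : Fin (n+1)) (h : i.1 < n) :
    snocF c v i = c ⟨i.1, h⟩ := by
  simp only [snocF, Fin.snoc, h, dite_true, cast_eq]
  rfl

lemma snoc_val_eq {n : ℕ} (c : Fin n → V) (v : V) (i : Fin (n+1)) (h : i.1 = n) :
    snocF c v i = v := by
  simp only [snocF, Fin.snoc, show ¬ i.1 < n by omega, dite_false, cast_eq]

lemma match_succ_iff {T k : ℕ} (hk : k < T) (y : Fin T → V) (c : Fin k → V) (v : V) :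
    (∀ s : Fin (k+1), y (Fin.castLE hk s) = snocF c v s) ↔
      ((∀ s : Fin k, y (Fin.castLE hk.le s) = c s) ∧ y ⟨k, hk⟩ = v) := by
  constructor
  · intro h
    constructor
    · intro s
      have h1 := h (Fin.castSucc s)
      rw [snoc_val_lt c v _ (by simp [s.isLt])] at h1
      rw [show (⟨(Fin.castSucc s).1, _⟩ : Fin k) = s from Fin.ext rfl] at h1
      have h2 : Fin.castLE hk (Fin.castSucc s) = Fin.castLE hk.le s := Fin.ext rfl
      rwa [h2] at h1
    · have h1 := h (Fin.last k)
      rw [snoc_val_eq c v _ (by simp)] at h1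
      have h2 : Fin.castLE hk (Fin.last k) = ⟨k, hk⟩ := Fin.ext rfl
      rwa [h2] at h1
  · rintro ⟨h1, h2⟩ s
    rcases Nat.lt_or_ge s.1 k with hs | hs
    · rw [snoc_val_lt c v s hs]
      have h3 : Fin.castLE hk s = Fin.castLE hk.le ⟨s.1, hs⟩ := Fin.ext rfl
      rw [h3]
      exact h1 ⟨s.1, hs⟩
    · have hsk : s.1 = k := by omega
      rw [snoc_val_eq c v s hsk]
      have h3 : Fin.castLE hk s = ⟨k, hk⟩ := Fin.ext hsk
      rw [h3]
      exact h2

lemma tailR_last (π : Policy X V) (T : ℕ) (x : X) (G : (Fin T → V) → ℝ)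
    (hk : T ≤ T) (c : Fin T → V) : tailR π T x G T hk c = G c := by
  rw [tailR]
  rw [Fintype.sum_eq_single c]
  · rw [if_pos]
    · rw [Finset.prod_eq_one fun s _ => if_neg (by omega : ¬ T ≤ s.1), one_mul]
    · intro s
      exact congrArg c (Fin.ext rfl)
  · intro y hy
    rw [if_neg]
    intro h
    apply hy
    funext s
    have := h s
    rwa [show Fin.castLE hk s = s from Fin.ext rfl] at this

lemma tailR_succ (π : Policy X V) (T : ℕ) (x : X) (G : (Fin T → V) → ℝ)
    (k : ℕ) (hk : k < T) (c : Fin k → V) :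
    tailR π T x G k hk.le c
      = ∑ v, π.prob k (x, c) v * tailR π T x G (k+1) hk (snocF c v) := by
  simp only [tailR, Finset.mul_sum]
  rw [Finset.sum_comm]
  apply Finset.sum_congr rfl
  intro y _
  by_cases hm : ∀ s : Fin k, y (Fin.castLE hk.le s) = c s
  · rw [if_pos hm]
    have hc : (fun u : Fin k => y (Fin.castLE hk.le u)) = c := funext hm
    -- rewrite RHS summands
    have hrhs : ∀ v : V,
        π.prob k (x, c) v *
          (if ∀ s : Fin (k+1), y (Fin.castLE hk s) = snocF c v s then
            (∏ s : Fin T, if k+1 ≤ s.1 then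
                π.prob s.1 (x, fun u : Fin s.1 => y (Fin.castLE s.isLt.le u)) (y s)
              else 1) * G y
          else 0)
        = (if y ⟨k, hk⟩ = v then
            π.prob k (x, c) v * ((∏ s : Fin T, if k+1 ≤ s.1 then
                π.prob s.1 (x, fun u : Fin s.1 => y (Fin.castLE s.isLt.le u)) (y s)
              else 1) * G y)
          else 0) := by
      intro v
      rw [if_congr (match_succ_iff hk y c v) rfl rfl]
      by_cases hv : y ⟨k, hk⟩ = v
      · rw [if_pos ⟨hm, hv⟩, if_pos hv]
      · rw [if_neg (fun h => hv h.2), if_neg hv, mul_zero]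
    rw [Finset.sum_congr rfl fun v _ => hrhs v]
    rw [Fintype.sum_ite_eq (y ⟨k, hk⟩)]
    -- now LHS product split
    have hsplit : (∏ s : Fin T, if k ≤ s.1 then
          π.prob s.1 (x, fun u : Fin s.1 => y (Fin.castLE s.isLt.le u)) (y s) else 1)
        = π.prob k (x, c) (y ⟨k, hk⟩) *
          ∏ s : Fin T, (if k+1 ≤ s.1 then
            π.prob s.1 (x, fun u : Fin s.1 => y (Fin.castLE s.isLt.le u)) (y s) else 1) := by
      have hfac : ∀ s : Fin T, (if k ≤ s.1 then
            π.prob s.1 (x, fun u : Fin s.1 => y (Fin.castLE s.isLt.le u)) (y s) else 1)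
          = (if s = (⟨k, hk⟩ : Fin T) then
              π.prob s.1 (x, fun u : Fin s.1 => y (Fin.castLE s.isLt.le u)) (y s) else 1) *
            (if k+1 ≤ s.1 then
              π.prob s.1 (x, fun u : Fin s.1 => y (Fin.castLE s.isLt.le u)) (y s) else 1) := by
        intro s
        by_cases h1 : s = (⟨k, hk⟩ : Fin T)
        · have hs1 : s.1 = k := by rw [h1]
          rw [if_pos (by omega), if_pos h1, if_neg (by omega), mul_one]
        · have hs : s.1 ≠ k := fun h => h1 (Fin.ext h)
          by_cases h2 : k+1 ≤ s.1
          · rw [if_pos (by omega), if_neg h1, if_pos h2, one_mul]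
          · rw [if_neg (by omega), if_neg h1, if_neg h2, one_mul]
      rw [Finset.prod_congr rfl fun s _ => hfac s, Finset.prod_mul_distrib,
        Finset.prod_ite_eq' univ (⟨k, hk⟩ : Fin T), if_pos (Finset.mem_univ _)]
      rw [hc]
    rw [hsplit, mul_assoc]
  · rw [if_neg hm]
    symm
    apply Finset.sum_eq_zero
    intro v _
    rw [if_neg, mul_zero]
    intro h
    exact hm ((match_succ_iff hk y c v).1 h).1

lemma tailR_mono (π : Policy X V) (T : ℕ) (x : X) {G G' : (Fin T → V) → ℝ}
    (hG : ∀ y, G y ≤ G' y) (k : ℕ) (hk : k ≤ T) (c : Fin k → V) :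
    tailR π T x G k hk c ≤ tailR π T x G' k hk c := by
  apply Finset.sum_le_sum
  intro y _
  by_cases hm : ∀ s : Fin k, y (Fin.castLE hk s) = c s
  · rw [if_pos hm, if_pos hm]
    apply mul_le_mul_of_nonneg_left (hG y)
    apply Finset.prod_nonneg
    intro s _
    by_cases h : k ≤ s.1
    · rw [if_pos h]; exact (π.pos _ _ _).le
    · rw [if_neg h]; exact zero_le_one
  · rw [if_neg hm, if_neg hm]

lemma tailR_nonneg (π : Policy X V) (T : ℕ) (x : X) {G : (Fin T → V) → ℝ}
    (hG : ∀ y, 0 ≤ G y) (k : ℕ) (hk : k ≤ T) (c : Fin k → V) :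
    0 ≤ tailR π T x G k hk c := by
  have h := tailR_mono π T x (G := fun _ => 0) (G' := G) hG k hk c
  refine le_trans (le_of_eq ?_) h
  rw [tailR]
  symm
  apply Finset.sum_eq_zero
  intro y _
  by_cases hm : ∀ s : Fin k, y (Fin.castLE hk s) = c s
  · rw [if_pos hm, mul_zero]
  · rw [if_neg hm]

lemma tailR_one (π : Policy X V) (T : ℕ) (x : X) :
    ∀ n k (hkn : k + n = T) (c : Fin k → V),
      tailR π T x (fun _ => (1:ℝ)) k (by omega) c = 1 := by
  intro n
  induction n with
  | zero =>
    intro k hkn c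
    obtain rfl : k = T := by omega
    exact tailR_last π _ x _ le_rfl c
  | succ n ih =>
    intro k hkn c
    have hk : k < T := by omega
    rw [tailR_succ π T x _ k hk c]
    have h2 : ∀ v : V, π.prob k (x, c) v * tailR π T x (fun _ => (1:ℝ)) (k+1) hk (snocF c v)
        = π.prob k (x, c) v := by
      intro v
      rw [ih (k+1) (by omega) (snocF c v), mul_one]
    rw [Finset.sum_congr rfl fun v _ => h2 v, π.sum_one]

lemma tailR_zero (π : Policy X V) (T : ℕ) (x : X) (G : (Fin T → V) → ℝ)
    (hk : 0 ≤ T) (c : Fin 0 → V) :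
    tailR π T x G 0 hk c = ∑ y : Fin T → V, traj π T x y * G y := by
  rw [tailR]
  apply Finset.sum_congr rfl
  intro y _
  rw [if_pos (fun s : Fin 0 => s.elim0)]
  congr 1

lemma traj_sum_one (π : Policy X V) (T : ℕ) (x : X) :
    ∑ y : Fin T → V, traj π T x y = 1 := by
  have h := tailR_one π T x T 0 (by omega) (fun s => s.elim0)
  rw [tailR_zero] at h
  simpa using h

lemma traj_pos (π : Policy X V) (T : ℕ) (x : X) (y : Fin T → V) : 0 < traj π T x y :=
  Finset.prod_pos fun s _ => π.pos _ _ _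

lemma Qval_eq_tailR (T : ℕ) (R : X → (Fin T → V) → ℝ) (π : Policy X V)
    (k : ℕ) (hk : k < T) (c : X × (Fin k → V)) (v : V) :
    Qval T R π k hk c v = tailR π T c.1 (R c.1) (k+1) hk (snocF c.2 v) := by
  rw [Qval, tailR]
  apply Finset.sum_congr rfl
  intro y _
  refine if_congr (Iff.symm (match_succ_iff hk y c.2 v)) ?_ rfl
  congr 1

lemma Qval_nonneg (T : ℕ) (R : X → (Fin T → V) → ℝ) (π : Policy X V)
    (k : ℕ) (hk : k < T) (c : X × (Fin k → V)) (v : V)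
    (hR : ∀ x y, R x y ∈ Set.Icc (0:ℝ) 1) : 0 ≤ Qval T R π k hk c v := by
  rw [Qval_eq_tailR]
  exact tailR_nonneg π T c.1 (fun y => (hR c.1 y).1) (k+1) hk (snocF c.2 v)

lemma Qval_le_one (T : ℕ) (R : X → (Fin T → V) → ℝ) (π : Policy X V)
    (k : ℕ) (hk : k < T) (c : X × (Fin k → V)) (v : V)
    (hR : ∀ x y, R x y ∈ Set.Icc (0:ℝ) 1) : Qval T R π k hk c v ≤ 1 := by
  rw [Qval_eq_tailR]
  refine le_trans (tailR_mono π T c.1 (G' := fun _ => (1:ℝ))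
    (fun y => (hR c.1 y).2) (k+1) hk (snocF c.2 v)) ?_
  rw [tailR_one π T c.1 (T - (k+1)) (k+1) (by omega) (snocF c.2 v)]

lemma gval_eq (T : ℕ) (R : X → (Fin T → V) → ℝ) (πroll πθ : Policy X V)
    (k : ℕ) (hk : k < T) (c : X × (Fin k → V)) :
    gval T R πroll πθ k hk c
      = ∑ v, (πθ.prob k c v - πroll.prob k c v) * Qval T R πroll k hk c v := by
  rw [gval]
  simp only [Aval, mul_sub, sub_mul, Finset.sum_sub_distrib]
  congr 1
  rw [← Finset.sum_mul, πθ.sum_one, one_mul, Vval]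

lemma head_zero (π : Policy X V) (x : X) (c : Fin 0 → V) : head π x 0 c = 1 := by
  rw [head]
  simp

lemma head_snoc (π : Policy X V) (x : X) (k : ℕ) (c : Fin k → V) (v : V) :
    head π x (k+1) (snocF c v) = head π x k c * π.prob k (x, c) v := by
  rw [head, head, Fin.prod_univ_castSucc]
  congr 1
  · apply Finset.prod_congr rfl
    intro s _
    have h1 : snocF c v (Fin.castSucc s) = c s := by
      rw [snoc_val_lt c v _ (by simp [s.isLt])]
      exact congrArg c (Fin.ext rfl)
    have h2 : (fun u : Fin (Fin.castSucc s).1 => snocF c v (Fin.castLE (Fin.castSucc s).isLt.le u))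
        = (fun u : Fin s.1 => c (Fin.castLE s.isLt.le u)) := by
      funext u
      rw [snoc_val_lt c v _ (by exact lt_of_lt_of_le u.isLt s.isLt.le)]
      exact congrArg c (Fin.ext rfl)
    rw [h1]
    exact congrArg (fun p => π.prob s.1 (x, p) (c s)) h2
  · have h1 : snocF c v (Fin.last k) = v := snoc_val_eq c v _ rfl
    have h2 : (fun u : Fin (Fin.last k).1 => snocF c v (Fin.castLE (Fin.last k).isLt.le u))
        = (fun u : Fin k => c u) := by
      funext u
      rw [snoc_val_lt c v _ u.isLt]
      exact congrArg c (Fin.ext rfl)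
    rw [h1]
    exact congrArg (fun p => π.prob k (x, p) v) h2

lemma head_eq_traj (π : Policy X V) (T : ℕ) (x : X) (c : Fin T → V) :
    head π x T c = traj π T x c := rfl

lemma visit_eq_head (π : Policy X V) (P : X → ℝ) (k : ℕ) (c : X × (Fin k → V)) :
    visit π P k c = P c.1 * head π c.1 k c.2 := rfl

/-- Reindex a sum over length-`(k+1)` prefixes via `snocF`. -/
lemma sum_snocF {k : ℕ} (f : (Fin (k+1) → V) → ℝ) :
    ∑ c' : Fin (k+1) → V, f c' = ∑ c : Fin k → V, ∑ v : V, f (snocF c v) := by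
  have hbij : Function.Bijective (fun p : (Fin k → V) × V => snocF p.1 p.2) := by
    constructor
    · intro p q h
      dsimp only at h
      have h1 : ∀ i : Fin k, p.1 i = q.1 i := by
        intro i
        have h0 := congrFun h (Fin.castSucc i)
        rwa [snoc_val_lt _ _ _ (i.isLt : (Fin.castSucc i).1 < k),
          snoc_val_lt _ _ _ (i.isLt : (Fin.castSucc i).1 < k),
          show (⟨(Fin.castSucc i).1, _⟩ : Fin k) = i from Fin.ext rfl] at h0
      have h2 : p.2 = q.2 := by
        have h0 := congrFun h (Fin.last k)
        rwa [snoc_val_eq _ _ _ (rfl : (Fin.last k).1 = k),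
          snoc_val_eq _ _ _ (rfl : (Fin.last k).1 = k)] at h0
      exact Prod.ext (funext h1) h2
    · intro c'
      refine ⟨(fun i => c' (Fin.castSucc i), c' (Fin.last k)), ?_⟩
      dsimp only
      funext i
      rcases Nat.lt_or_ge i.1 k with h | h
      · rw [snoc_val_lt _ _ _ h]
        exact congrArg c' (Fin.ext rfl)
      · have : i.1 = k := by omega
        rw [snoc_val_eq _ _ _ this]
        exact congrArg c' (Fin.ext this.symm)
  have h1 : ∑ p : (Fin k → V) × V, f (snocF p.1 p.2) = ∑ c' : Fin (k+1) → V, f c' :=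
    Fintype.sum_bijective _ hbij _ _ (fun p => rfl)
  rw [← h1, Fintype.sum_prod_type]

/-- The head probability is the marginal of the trajectory probability. -/
lemma head_marginal (π : Policy X V) (T : ℕ) (x : X) (k : ℕ) (hk : k ≤ T) (c : Fin k → V) :
    head π x k c
      = ∑ y : Fin T → V,
          if ∀ s : Fin k, y (Fin.castLE hk s) = c s then traj π T x y else 0 := by
  have key : ∀ y : Fin T → V, (∀ s : Fin k, y (Fin.castLE hk s) = c s) →
      traj π T x y = head π x k c *
        (∏ s : Fin T, if k ≤ s.1 then
          π.prob s.1 (x, fun u : Fin s.1 => y (Fin.castLE s.isLt.le u)) (y s) else 1) := by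
    intro y hm
    rw [traj]
    have hsplit : ∀ s : Fin T,
        π.prob s.1 (x, fun u : Fin s.1 => y (Fin.castLE s.isLt.le u)) (y s)
        = (if s.1 < k then
            π.prob s.1 (x, fun u : Fin s.1 => y (Fin.castLE s.isLt.le u)) (y s) else 1) *
          (if k ≤ s.1 then
            π.prob s.1 (x, fun u : Fin s.1 => y (Fin.castLE s.isLt.le u)) (y s) else 1) := by
      intro s
      rcases Nat.lt_or_ge s.1 k with h | h
      · rw [if_pos h, if_neg (by omega), mul_one]
      · rw [if_neg (by omega), if_pos h, one_mul]
    rw [Finset.prod_congr rfl fun s _ => hsplit s, Finset.prod_mul_distrib]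
    congr 1
    -- head part
    rw [head, ← Finset.prod_filter]
    apply Finset.prod_bij (i := fun (s : Fin T) (hs : s ∈ univ.filter (fun s : Fin T => s.1 < k)) =>
      (⟨s.1, (Finset.mem_filter.1 hs).2⟩ : Fin k))
    · intro a ha
      exact Finset.mem_univ _
    · intro a ha b hb hab
      have hv := congrArg Fin.val hab
      exact Fin.ext hv
    · intro b _
      refine ⟨Fin.castLE hk b, Finset.mem_filter.2 ⟨Finset.mem_univ _, b.isLt⟩, Fin.ext rfl⟩
    · intro s hs
      have hsk : s.1 < k := (Finset.mem_filter.1 hs).2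
      have h1 : y s = c ⟨s.1, hsk⟩ := by
        have := hm ⟨s.1, hsk⟩
        rwa [show Fin.castLE hk ⟨s.1, hsk⟩ = s from Fin.ext rfl] at this
      have h2 : (fun u : Fin s.1 => y (Fin.castLE s.isLt.le u))
          = (fun u : Fin (⟨s.1, hsk⟩ : Fin k).1 => c (Fin.castLE (⟨s.1, hsk⟩ : Fin k).isLt.le u)) := by
        funext u
        have h3 : (⟨u.1, lt_of_lt_of_le (lt_trans u.isLt hsk) hk⟩ : Fin T)
            = Fin.castLE s.isLt.le u := Fin.ext rfl
        have := hm ⟨u.1, lt_trans u.isLt hsk⟩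
        rw [show Fin.castLE hk ⟨u.1, lt_trans u.isLt hsk⟩ = Fin.castLE s.isLt.le u
          from Fin.ext rfl] at this
        rw [this]
        exact congrArg c (Fin.ext rfl)
      rw [h1, h2]
  calc head π x k c
      = head π x k c * tailR π T x (fun _ => (1:ℝ)) k hk c := by
        rw [tailR_one π T x (T - k) k (by omega) c, mul_one]
    _ = ∑ y : Fin T → V, if ∀ s : Fin k, y (Fin.castLE hk s) = c s then traj π T x y else 0 := by
        rw [tailR, Finset.mul_sum]
        apply Finset.sum_congr rfl
        intro y _
        by_cases hm : ∀ s : Fin k, y (Fin.castLE hk s) = c s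
        · rw [if_pos hm, if_pos hm, mul_one, key y hm]
        · rw [if_neg hm, if_neg hm, mul_zero]

/-- Collapse a sum over prefixes against the matching indicator. -/
lemma sum_prefix_pick {T k : ℕ} (hk : k ≤ T) (y : Fin T → V) (r : ℝ) :
    (∑ c : Fin k → V, if ∀ s : Fin k, y (Fin.castLE hk s) = c s then r else 0) = r := by
  rw [Fintype.sum_eq_single (fun s : Fin k => y (Fin.castLE hk s))]
  · rw [if_pos (fun s => rfl)]
  · intro c hc
    rw [if_neg]
    intro h
    exact hc (funext fun s => (h s).symm)

/-- Performance difference lemma: the gap of values equals the surrogate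
computed with the visitation distribution of `π_θ`. -/
lemma perf_diff (P : X → ℝ) (T : ℕ) (R : X → (Fin T → V) → ℝ) (πroll πθ : Policy X V) :
    Jval P T R πθ - Jval P T R πroll
      = ∑ k : Fin T, ∑ c : X × (Fin k.1 → V),
          visit πθ P k.1 c * gval T R πroll πθ k.1 k.isLt c := by
  have hx : ∀ x : X,
      (∑ y : Fin T → V, traj πθ T x y * R x y) - (∑ y : Fin T → V, traj πroll T x y * R x y)
        = ∑ k : Fin T, ∑ c : Fin k.1 → V,
            head πθ x k.1 c * gval T R πroll πθ k.1 k.isLt (x, c) := by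
    intro x
    set Mf : ℕ → ℝ := fun k => if hk : k ≤ T then
      ∑ c : Fin k → V, head πθ x k c * tailR πroll T x (R x) k hk c else 0 with hMf
    set g : ℕ → ℝ := fun k => if hk : k < T then
      ∑ c : Fin k → V, head πθ x k c * gval T R πroll πθ k hk (x, c) else 0 with hg
    have h0 : Mf 0 = ∑ y : Fin T → V, traj πroll T x y * R x y := by
      rw [hMf]
      simp only [dif_pos (Nat.zero_le T)]
      rw [Fintype.sum_unique]
      rw [head_zero, one_mul, tailR_zero]
    have hT : Mf T = ∑ y : Fin T → V, traj πθ T x y * R x y := by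
      rw [hMf]
      simp only [dif_pos (le_refl T)]
      apply Finset.sum_congr rfl
      intro c _
      rw [tailR_last, head_eq_traj]
    have hstep : ∀ k ∈ Finset.range T, Mf (k+1) - Mf k = g k := by
      intro k hkmem
      have hk : k < T := Finset.mem_range.1 hkmem
      rw [hMf, hg]
      dsimp only
      rw [dif_pos (show k + 1 ≤ T from hk), dif_pos hk.le, dif_pos hk]
      rw [sum_snocF (fun c' => head πθ x (k+1) c' * tailR πroll T x (R x) (k+1) hk c')]
      have hterm : ∀ c : Fin k → V, ∀ v : V,
          head πθ x (k+1) (snocF c v) * tailR πroll T x (R x) (k+1) hk (snocF c v)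
            = head πθ x k c * (πθ.prob k (x, c) v * Qval T R πroll k hk (x, c) v) := by
        intro c v
        rw [head_snoc, Qval_eq_tailR]
        ring
      rw [Finset.sum_congr rfl fun c _ => Finset.sum_congr rfl fun v _ => hterm c v]
      have hMk : ∀ c : Fin k → V,
          head πθ x k c * tailR πroll T x (R x) k hk.le c
            = head πθ x k c * ∑ v, πroll.prob k (x, c) v * Qval T R πroll k hk (x, c) v := by
        intro c
        rw [tailR_succ πroll T x (R x) k hk c]
        congr 1
        apply Finset.sum_congr rfl
        intro v _
        rw [Qval_eq_tailR]
      rw [Finset.sum_congr rfl fun c _ => hMk c]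
      rw [← Finset.sum_sub_distrib]
      apply Finset.sum_congr rfl
      intro c _
      rw [← Finset.mul_sum, ← mul_sub, ← Finset.sum_sub_distrib]
      congr 1
      rw [gval_eq]
      apply Finset.sum_congr rfl
      intro v _
      ring
    have htel : Mf T - Mf 0 = ∑ k ∈ Finset.range T, (Mf (k+1) - Mf k) :=
      (Finset.sum_range_sub Mf T).symm
    rw [← hT, ← h0, htel, Finset.sum_congr rfl hstep]
    rw [← Fin.sum_univ_eq_sum_range g T]
    apply Finset.sum_congr rfl
    intro k _
    rw [hg]
    simp only [dif_pos k.isLt]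
  have hJ : ∀ π : Policy X V, Jval P T R π = ∑ x, P x * ∑ y : Fin T → V, traj π T x y * R x y :=
    fun π => rfl
  rw [hJ, hJ, ← Finset.sum_sub_distrib]
  have e1 : ∀ x ∈ (univ : Finset X),
      P x * (∑ y : Fin T → V, traj πθ T x y * R x y)
        - P x * (∑ y : Fin T → V, traj πroll T x y * R x y)
      = ∑ k : Fin T, ∑ c : Fin k.1 → V,
          P x * (head πθ x k.1 c * gval T R πroll πθ k.1 k.isLt (x, c)) := by
    intro x _
    rw [← mul_sub, hx x, Finset.mul_sum]
    exact Finset.sum_congr rfl fun k _ => Finset.mul_sum _ _ _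
  rw [Finset.sum_congr rfl e1, Finset.sum_comm]
  apply Finset.sum_congr rfl
  intro k _
  rw [Fintype.sum_prod_type
    (f := fun c : X × (Fin k.1 → V) => visit πθ P k.1 c * gval T R πroll πθ k.1 k.isLt c)]
  apply Finset.sum_congr rfl
  intro x _
  apply Finset.sum_congr rfl
  intro c _
  rw [visit_eq_head, mul_assoc]

end Comb


section Bounds

variable {X V : Type*} [Fintype X] [Fintype V]

open scoped Classical

lemma gval_bound (T : ℕ) (R : X → (Fin T → V) → ℝ) (hR : ∀ x y, R x y ∈ Set.Icc (0:ℝ) 1)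
    (πroll πθ : Policy X V) (k : ℕ) (hk : k < T) (c : X × (Fin k → V)) (Dkl : ℝ)
    (hD : klDiv (πroll.prob k c) (πθ.prob k c) ≤ Dkl) :
    |gval T R πroll πθ k hk c| ≤ Real.sqrt Dkl := by
  have hQ0 : ∀ v, 0 ≤ Qval T R πroll k hk c v := fun v => Qval_nonneg T R πroll k hk c v hR
  have hQ1 : ∀ v, Qval T R πroll k hk c v ≤ 1 := fun v => Qval_le_one T R πroll k hk c v hR
  have e : gval T R πroll πθ k hk c
      = ∑ v, (πθ.prob k c v - πroll.prob k c v) * (Qval T R πroll k hk c v - 1/2) := by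
    rw [gval_eq]
    have e2 : (∑ v, (πθ.prob k c v - πroll.prob k c v) * (Qval T R πroll k hk c v - 1/2))
        = (∑ v, (πθ.prob k c v - πroll.prob k c v) * Qval T R πroll k hk c v)
          - ((∑ v, πθ.prob k c v) - (∑ v, πroll.prob k c v)) / 2 := by
      rw [show (∑ v, πθ.prob k c v - ∑ v, πroll.prob k c v) / 2
          = ∑ v, (πθ.prob k c v - πroll.prob k c v) / 2 by
            rw [← Finset.sum_sub_distrib, Finset.sum_div], ← Finset.sum_sub_distrib]
      apply Finset.sum_congr rfl
      intro v _
      ring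
    rw [e2, πθ.sum_one, πroll.sum_one, sub_self, zero_div, sub_zero]
  rw [e]
  have habs : ∀ v, |(πθ.prob k c v - πroll.prob k c v) * (Qval T R πroll k hk c v - 1/2)|
      ≤ |πroll.prob k c v - πθ.prob k c v| * (1/2) := by
    intro v
    rw [abs_mul, abs_sub_comm]
    apply mul_le_mul_of_nonneg_left _ (abs_nonneg _)
    rw [abs_le]
    constructor
    · have := hQ0 v; linarith
    · have := hQ1 v; linarith
  calc |∑ v, (πθ.prob k c v - πroll.prob k c v) * (Qval T R πroll k hk c v - 1/2)|
      ≤ ∑ v, |(πθ.prob k c v - πroll.prob k c v) * (Qval T R πroll k hk c v - 1/2)| :=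
        Finset.abs_sum_le_sum_abs _ _
    _ ≤ ∑ v, |πroll.prob k c v - πθ.prob k c v| * (1/2) :=
        Finset.sum_le_sum fun v _ => habs v
    _ = (∑ v, |πroll.prob k c v - πθ.prob k c v|) / 2 := by
        rw [← Finset.sum_mul]; ring
    _ ≤ (2 * Real.sqrt (klDiv (πroll.prob k c) (πθ.prob k c))) / 2 := by
        apply div_le_div_of_nonneg_right ?_ (by norm_num)
        exact sum_abs_le_two_sqrt_klDiv (fun v => πroll.pos k c v) (fun v => πθ.pos k c v)
          (πroll.sum_one k c) (πθ.sum_one k c)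
    _ = Real.sqrt (klDiv (πroll.prob k c) (πθ.prob k c)) := by ring
    _ ≤ Real.sqrt Dkl := Real.sqrt_le_sqrt hD

lemma visit_diff_bound (P : X → ℝ) (hP0 : ∀ x, 0 ≤ P x) (T : ℕ) (πroll πθ : Policy X V)
    (k : ℕ) (hk : k ≤ T) :
    ∑ c : X × (Fin k → V), |visit πθ P k c - visit πroll P k c|
      ≤ ∑ x, P x * ∑ y : Fin T → V, |traj πroll T x y - traj πθ T x y| := by
  rw [Fintype.sum_prod_type (f := fun c : X × (Fin k → V) => |visit πθ P k c - visit πroll P k c|)]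
  apply Finset.sum_le_sum
  intro x _
  have e1 : ∀ c : Fin k → V, |visit πθ P k (x, c) - visit πroll P k (x, c)|
      = P x * |head πθ x k c - head πroll x k c| := by
    intro c
    rw [visit_eq_head, visit_eq_head, ← mul_sub, abs_mul, abs_of_nonneg (hP0 x)]
  rw [Finset.sum_congr rfl fun c _ => e1 c, ← Finset.mul_sum]
  apply mul_le_mul_of_nonneg_left _ (hP0 x)
  have e2 : ∀ c : Fin k → V, |head πθ x k c - head πroll x k c|
      ≤ ∑ y : Fin T → V, (if ∀ s : Fin k, y (Fin.castLE hk s) = c s then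
          |traj πroll T x y - traj πθ T x y| else 0) := by
    intro c
    rw [head_marginal πθ T x k hk c, head_marginal πroll T x k hk c, ← Finset.sum_sub_distrib]
    refine le_trans (Finset.abs_sum_le_sum_abs _ _) ?_
    apply Finset.sum_le_sum
    intro y _
    by_cases hm : ∀ s : Fin k, y (Fin.castLE hk s) = c s
    · rw [if_pos hm, if_pos hm, if_pos hm, abs_sub_comm]
    · rw [if_neg hm, if_neg hm, if_neg hm, sub_zero, abs_zero]
  refine le_trans (Finset.sum_le_sum fun c (_ : c ∈ univ) => e2 c) ?_
  rw [Finset.sum_comm]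
  apply le_of_eq
  apply Finset.sum_congr rfl
  intro y _
  exact sum_prefix_pick hk y _

lemma seq_tv_bound (P : X → ℝ) (hP0 : ∀ x, 0 ≤ P x) (hP1 : ∑ x, P x = 1)
    (T : ℕ) (πroll πθ : Policy X V) :
    ∑ x, P x * ∑ y : Fin T → V, |traj πroll T x y - traj πθ T x y|
      ≤ 2 * Real.sqrt (seqKL P T πroll πθ) := by
  have hklx : ∀ x, 0 ≤ klDiv (fun y : Fin T → V => traj πroll T x y)
      (fun y => traj πθ T x y) := fun x =>
    klDiv_nonneg (fun y => traj_pos πroll T x y) (fun y => traj_pos πθ T x y)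
      (traj_sum_one πroll T x) (traj_sum_one πθ T x)
  have h1 : ∀ x : X, P x * ∑ y : Fin T → V, |traj πroll T x y - traj πθ T x y|
      ≤ 2 * (Real.sqrt (P x) * Real.sqrt (P x *
        klDiv (fun y : Fin T → V => traj πroll T x y) (fun y => traj πθ T x y))) := by
    intro x
    have h2 := sum_abs_le_two_sqrt_klDiv (fun y => traj_pos πroll T x y)
      (fun y => traj_pos πθ T x y) (traj_sum_one πroll T x) (traj_sum_one πθ T x)
    calc P x * ∑ y : Fin T → V, |traj πroll T x y - traj πθ T x y|
        ≤ P x * (2 * Real.sqrt (klDiv (fun y : Fin T → V => traj πroll T x y)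
            (fun y => traj πθ T x y))) := mul_le_mul_of_nonneg_left h2 (hP0 x)
      _ = 2 * (Real.sqrt (P x) * Real.sqrt (P x *
            klDiv (fun y : Fin T → V => traj πroll T x y) (fun y => traj πθ T x y))) := by
          rw [Real.sqrt_mul (hP0 x)]
          conv_lhs => rw [← Real.mul_self_sqrt (hP0 x)]
          ring
  calc ∑ x, P x * ∑ y : Fin T → V, |traj πroll T x y - traj πθ T x y|
      ≤ ∑ x, 2 * (Real.sqrt (P x) * Real.sqrt (P x *
          klDiv (fun y : Fin T → V => traj πroll T x y) (fun y => traj πθ T x y))) :=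
        Finset.sum_le_sum fun x _ => h1 x
    _ = 2 * ∑ x, Real.sqrt (P x) * Real.sqrt (P x *
          klDiv (fun y : Fin T → V => traj πroll T x y) (fun y => traj πθ T x y)) := by
        rw [Finset.mul_sum]
    _ ≤ 2 * (Real.sqrt (∑ x, P x) * Real.sqrt (∑ x, P x *
          klDiv (fun y : Fin T → V => traj πroll T x y) (fun y => traj πθ T x y))) := by
        apply mul_le_mul_of_nonneg_left _ (by norm_num)
        exact Real.sum_sqrt_mul_sqrt_le _ (fun x => hP0 x)
          (fun x => mul_nonneg (hP0 x) (hklx x))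
    _ = 2 * Real.sqrt (seqKL P T πroll πθ) := by
        rw [hP1, Real.sqrt_one, one_mul, seqKL]

end Bounds

/-- **Mixed bound (Theorem 3.2)**: if the reward takes values in `[0,1]`, then
`|Error| ≤ 2 · T · √(D_KL^tok,max · D_KL^seq)`. Here `Dkl` is (an upper bound on, in
particular the maximum of) the token-level KL divergences `D_KL(π_roll(·|c) ‖ π_θ(·|c))`
over all steps and contexts. -/
theorem mixed_bound
    {X V : Type*} [Fintype X] [Fintype V]
    (T : ℕ) (hT : 1 ≤ T)
    (P : X → ℝ) (hP0 : ∀ x, 0 ≤ P x) (hP1 : ∑ x, P x = 1)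
    (R : X → (Fin T → V) → ℝ) (hR : ∀ x y, R x y ∈ Set.Icc (0:ℝ) 1)
    (πroll πθ : Policy X V)
    (Dkl : ℝ)
    (hDkl : ∀ k : ℕ, k < T → ∀ c : X × (Fin k → V),
      klDiv (πroll.prob k c) (πθ.prob k c) ≤ Dkl) :
    |errVal P T R πroll πθ| ≤ 2 * T * Real.sqrt (Dkl * seqKL P T πroll πθ) := by
    classical
  -- Nonnegativity facts
  have hXne : Nonempty X := by
    by_contra h
    rw [not_nonempty_iff] at h
    rw [Finset.univ_eq_empty, Finset.sum_empty] at hP1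
    norm_num at hP1
  obtain ⟨x0⟩ := hXne
  have hDkl0 : 0 ≤ Dkl := by
    have h := hDkl 0 (by omega) (x0, fun s => s.elim0)
    refine le_trans ?_ h
    exact klDiv_nonneg (fun v => πroll.pos _ _ v) (fun v => πθ.pos _ _ v)
      (πroll.sum_one _ _) (πθ.sum_one _ _)
  have hseq0 : 0 ≤ seqKL P T πroll πθ :=
    Finset.sum_nonneg fun x _ => mul_nonneg (hP0 x)
      (klDiv_nonneg (fun y => traj_pos πroll T x y) (fun y => traj_pos πθ T x y)
        (traj_sum_one πroll T x) (traj_sum_one πθ T x))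
  -- Decomposition of the error
  have hdec : errVal P T R πroll πθ
      = ∑ k : Fin T, ∑ c : X × (Fin k.1 → V),
          (visit πθ P k.1 c - visit πroll P k.1 c) * gval T R πroll πθ k.1 k.isLt c := by
    rw [errVal, perf_diff P T R πroll πθ, surrogate, ← Finset.sum_sub_distrib]
    apply Finset.sum_congr rfl
    intro k _
    rw [← Finset.sum_sub_distrib]
    apply Finset.sum_congr rfl
    intro c _
    ring
  rw [hdec]
  have hkb : ∀ k : Fin T,
      |∑ c : X × (Fin k.1 → V),
          (visit πθ P k.1 c - visit πroll P k.1 c) * gval T R πroll πθ k.1 k.isLt c|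
        ≤ Real.sqrt Dkl * (2 * Real.sqrt (seqKL P T πroll πθ)) := by
    intro k
    calc |∑ c : X × (Fin k.1 → V),
          (visit πθ P k.1 c - visit πroll P k.1 c) * gval T R πroll πθ k.1 k.isLt c|
        ≤ ∑ c : X × (Fin k.1 → V),
            |(visit πθ P k.1 c - visit πroll P k.1 c) * gval T R πroll πθ k.1 k.isLt c| :=
          Finset.abs_sum_le_sum_abs _ _
      _ = ∑ c : X × (Fin k.1 → V),
            |visit πθ P k.1 c - visit πroll P k.1 c| * |gval T R πroll πθ k.1 k.isLt c| :=
          Finset.sum_congr rfl fun c _ => abs_mul _ _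
      _ ≤ ∑ c : X × (Fin k.1 → V),
            |visit πθ P k.1 c - visit πroll P k.1 c| * Real.sqrt Dkl :=
          Finset.sum_le_sum fun c _ => mul_le_mul_of_nonneg_left
            (gval_bound T R hR πroll πθ k.1 k.isLt c Dkl (hDkl k.1 k.isLt c)) (abs_nonneg _)
      _ = (∑ c : X × (Fin k.1 → V), |visit πθ P k.1 c - visit πroll P k.1 c|) * Real.sqrt Dkl :=
          (Finset.sum_mul _ _ _).symm
      _ ≤ (2 * Real.sqrt (seqKL P T πroll πθ)) * Real.sqrt Dkl := by
          apply mul_le_mul_of_nonneg_right _ (Real.sqrt_nonneg _)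
          exact le_trans (visit_diff_bound P hP0 T πroll πθ k.1 k.isLt.le)
            (seq_tv_bound P hP0 hP1 T πroll πθ)
      _ = Real.sqrt Dkl * (2 * Real.sqrt (seqKL P T πroll πθ)) := by ring
  calc |∑ k : Fin T, ∑ c : X × (Fin k.1 → V),
        (visit πθ P k.1 c - visit πroll P k.1 c) * gval T R πroll πθ k.1 k.isLt c|
      ≤ ∑ k : Fin T, |∑ c : X × (Fin k.1 → V),
          (visit πθ P k.1 c - visit πroll P k.1 c) * gval T R πroll πθ k.1 k.isLt c| :=
        Finset.abs_sum_le_sum_abs _ _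
    _ ≤ ∑ _k : Fin T, Real.sqrt Dkl * (2 * Real.sqrt (seqKL P T πroll πθ)) :=
        Finset.sum_le_sum fun k _ => hkb k
    _ = T * (Real.sqrt Dkl * (2 * Real.sqrt (seqKL P T πroll πθ))) := by
        rw [Finset.sum_const, Finset.card_univ, Fintype.card_fin, nsmul_eq_mul]
    _ = 2 * T * Real.sqrt (Dkl * seqKL P T πroll πθ) := by
        rw [Real.sqrt_mul hDkl0]
        ring
end
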